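/- arXiv:1012.1997 — 2 statements merged into one kernel-verified Lean document; each statement's English description precedes it below -/
import Mathlib

section
/- Let z₁ < z₂ be two consecutive critical points of fᵏ (k ≥ 2), with f(x_c) > x_c. If fᵏ(z₁) − x_c and fᵏ(z₂) − x_c have strictly opposite signs, then there exists a unique z ∈ (z₁, z₂) that is a critical point of f^{k+1}; moreover (f^{k+1})''(z) < 0 and f^{k+1}(z) = f(x_c) > x_c. If instead fᵏ(z₁) − x_c and fᵏ(z₂) − x_c do not have opposite signs, then f^{k+1} has no critical point in (z₁, z₂). -/
open Set Filter Topology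

/-!
On `(z₁, z₂)` the chain rule gives `(f^[k+1])' = f'(f^[k]) · (f^[k])'`, and the second factor
does not vanish there, so the critical points of `f^[k+1]` in `(z₁, z₂)` are exactly the
solutions of `f^[k] w = x_c`. By Rolle's theorem `f^[k]` is strictly monotone on `[z₁, z₂]`, such a
solution exists iff `x_c` lies strictly between `f^[k] z₁` and `f^[k] z₂`, and it is then
unique. At that point `f'(x_c) = 0` kills one term of the second-order chain rule, leaving
`(f^[k+1])'' = f''(x_c) · ((f^[k])')² < 0`.
-/

theorem ContDiff.iterate {𝕜 E : Type*} [NontriviallyNormedField 𝕜] [NormedAddCommGroup E]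
    [NormedSpace 𝕜 E] {n : WithTop ℕ∞} {f : E → E} (hf : ContDiff 𝕜 n f) (k : ℕ) :
    ContDiff 𝕜 n f^[k] := by
  induction k with
  | zero => exact contDiff_id
  | succ k ih => rw [Function.iterate_succ']; exact hf.comp ih

theorem deriv_iterate_succ {𝕜 : Type*} [NontriviallyNormedField 𝕜] {f : 𝕜 → 𝕜}
    (hf : Differentiable 𝕜 f) (n : ℕ) (x : 𝕜) :
    deriv (f^[n + 1]) x = deriv f (f^[n] x) * deriv (f^[n]) x := by
  rw [Function.iterate_succ']
  exact deriv_comp x (hf _) (hf.iterate n x)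

theorem deriv_deriv_comp {𝕜 : Type*} [NontriviallyNormedField 𝕜] {g h : 𝕜 → 𝕜} {x : 𝕜}
    (hg : Differentiable 𝕜 g) (hh : Differentiable 𝕜 h) (hg' : DifferentiableAt 𝕜 (deriv g) (h x))
    (hh' : DifferentiableAt 𝕜 (deriv h) x) :
    deriv (deriv (g ∘ h)) x =
      deriv (deriv g) (h x) * deriv h x ^ 2 + deriv g (h x) * deriv (deriv h) x := by
  have hchain : deriv (g ∘ h) = fun y ↦ deriv g (h y) * deriv h y :=
    funext fun y ↦ deriv_comp y (hg _) (hh _)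
  have hinner_diff : DifferentiableAt 𝕜 (fun y ↦ deriv g (h y)) x := hg'.comp x (hh x)
  have hinner : deriv (fun y ↦ deriv g (h y)) x = deriv (deriv g) (h x) * deriv h x :=
    deriv_comp x hg' (hh x)
  rw [hchain, deriv_fun_mul hinner_diff hh', hinner]
  ring

theorem eq_zero_of_pos_left_of_neg_right {g : ℝ → ℝ} {x : ℝ} (hg : ContinuousAt g x)
    (hl : ∀ᶠ y in 𝓝[<] x, 0 < g y) (hr : ∀ᶠ y in 𝓝[>] x, g y < 0) : g x = 0 :=
  le_antisymm (le_of_tendsto (hg.tendsto.mono_left nhdsWithin_le_nhds) (hr.mono fun _ ↦ le_of_lt))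
    (ge_of_tendsto (hg.tendsto.mono_left nhdsWithin_le_nhds) (hl.mono fun _ ↦ le_of_lt))

theorem deriv_eq_zero_iff_of_unimodal {f : ℝ → ℝ} {a b x_c y : ℝ}
    (hcont : ContinuousAt (deriv f) x_c) (hxc : x_c ∈ Ioo a b)
    (hup : ∀ x ∈ Ico a x_c, 0 < deriv f x) (hdn : ∀ x ∈ Ioc x_c b, deriv f x < 0)
    (hy : y ∈ Icc a b) : deriv f y = 0 ↔ y = x_c := by
  refine ⟨fun hy0 ↦ ?_, ?_⟩
  · by_contra hne
    rcases lt_or_gt_of_ne hne with h | h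
    · exact (hup y ⟨hy.1, h⟩).ne' hy0
    · exact (hdn y ⟨h, hy.2⟩).ne hy0
  · rintro rfl
    refine eq_zero_of_pos_left_of_neg_right hcont ?_ ?_
    · filter_upwards [Ioo_mem_nhdsLT hxc.1] with x hx using hup x ⟨hx.1.le, hx.2⟩
    · filter_upwards [Ioo_mem_nhdsGT hxc.2] with x hx using hdn x ⟨hx.1, hx.2.le⟩

theorem strictMonoOn_or_strictAntiOn_of_deriv_ne_zero {g : ℝ → ℝ} {a b : ℝ} (hab : a ≤ b)
    (hg : ContinuousOn g (Icc a b)) (hd : ∀ x ∈ Ioo a b, deriv g x ≠ 0) :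
    StrictMonoOn g (Icc a b) ∨ StrictAntiOn g (Icc a b) := by
  refine hg.strictMonoOn_of_injOn_Icc' hab ?_
  have ne_of_lt : ∀ x ∈ Icc a b, ∀ y ∈ Icc a b, x < y → g x ≠ g y := by
    intro x hx y hy hxy hgxy
    obtain ⟨c, hc, hc0⟩ := exists_deriv_eq_zero hxy (hg.mono (Icc_subset_Icc hx.1 hy.2)) hgxy
    exact hd c ⟨hx.1.trans_lt hc.1, hc.2.trans_le hy.2⟩ hc0
  intro x hx y hy hgxy
  by_contra hne
  rcases lt_or_gt_of_ne hne with h | h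
  · exact ne_of_lt x hx y hy h hgxy
  · exact ne_of_lt y hy x hx h hgxy.symm

theorem exists_mem_Ioo_eq_iff_mul_neg {g : ℝ → ℝ} {a b c : ℝ} (hab : a ≤ b)
    (hg : ContinuousOn g (Icc a b)) (hmono : StrictMonoOn g (Icc a b) ∨ StrictAntiOn g (Icc a b)) :
    (∃ z ∈ Ioo a b, g z = c) ↔ (g a - c) * (g b - c) < 0 := by
  have ha : a ∈ Icc a b := left_mem_Icc.mpr hab
  have hb : b ∈ Icc a b := right_mem_Icc.mpr hab
  constructor
  · rintro ⟨z, hz, rfl⟩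
    have hz' : z ∈ Icc a b := Ioo_subset_Icc_self hz
    rcases hmono with h | h
    · exact mul_neg_of_neg_of_pos (sub_neg.mpr (h ha hz' hz.1)) (sub_pos.mpr (h hz' hb hz.2))
    · exact mul_neg_of_pos_of_neg (sub_pos.mpr (h ha hz' hz.1)) (sub_neg.mpr (h hz' hb hz.2))
  · intro hprod
    rcases mul_neg_iff.mp hprod with ⟨ha0, hb0⟩ | ⟨ha0, hb0⟩
    · exact intermediate_value_Ioo' hab hg ⟨sub_neg.mp hb0, sub_pos.mp ha0⟩
    · exact intermediate_value_Ioo hab hg ⟨sub_neg.mp ha0, sub_pos.mp hb0⟩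

theorem crit_between_consecutive_crits_general
    (a b x_c : ℝ) (f : ℝ → ℝ)
    (hmap : Set.MapsTo f (Set.Icc a b) (Set.Icc a b))
    (hf : ContDiff ℝ 2 f)
    (hxc : x_c ∈ Set.Ioo a b)
    (h2 : deriv (deriv f) x_c < 0)
    (hup : ∀ x ∈ Set.Ico a x_c, 0 < deriv f x)
    (hdn : ∀ x ∈ Set.Ioc x_c b, deriv f x < 0)
    (k : ℕ) (hc : f x_c > x_c)
    (z₁ z₂ : ℝ) (hz₁ : z₁ ∈ Icc a b) (hz₂ : z₂ ∈ Icc a b) (hlt : z₁ < z₂)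
    (hcons : ∀ x ∈ Ioo z₁ z₂, deriv (f^[k]) x ≠ 0) :
    ((f^[k] z₁ - x_c) * (f^[k] z₂ - x_c) < 0 →
      ∃ z ∈ Ioo z₁ z₂, deriv (f^[k+1]) z = 0 ∧
        deriv (deriv (f^[k+1])) z < 0 ∧ f^[k+1] z = f x_c ∧ f x_c > x_c ∧
        ∀ w ∈ Ioo z₁ z₂, deriv (f^[k+1]) w = 0 → w = z) ∧
    (¬ ((f^[k] z₁ - x_c) * (f^[k] z₂ - x_c) < 0) →
      ∀ w ∈ Ioo z₁ z₂, deriv (f^[k+1]) w ≠ 0) := by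
  have hdiff : Differentiable ℝ f := hf.differentiable two_ne_zero
  have hfk : ContDiff ℝ 2 f^[k] := hf.iterate k
  have hcrit_f : ∀ y ∈ Icc a b, deriv f y = 0 ↔ y = x_c := fun y ↦
    deriv_eq_zero_iff_of_unimodal (hf.continuous_deriv one_le_two).continuousAt hxc hup hdn
  have hcrit : ∀ w ∈ Ioo z₁ z₂, deriv (f^[k+1]) w = 0 ↔ f^[k] w = x_c := fun w hw ↦ by
    rw [deriv_iterate_succ hdiff, mul_eq_zero, or_iff_left (hcons w hw)]
    exact hcrit_f _ (hmap.iterate k ⟨hz₁.1.trans hw.1.le, hw.2.le.trans hz₂.2⟩)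
  have hmono := strictMonoOn_or_strictAntiOn_of_deriv_ne_zero hlt.le
    hfk.continuous.continuousOn hcons
  have hroot := exists_mem_Ioo_eq_iff_mul_neg (c := x_c) hlt.le hfk.continuous.continuousOn hmono
  refine ⟨fun hprod ↦ ?_, fun hprod w hw hw0 ↦ hprod (hroot.mp ⟨w, hw, (hcrit w hw).mp hw0⟩)⟩
  obtain ⟨z, hz, hzc⟩ := hroot.mpr hprod
  refine ⟨z, hz, (hcrit z hz).mpr hzc, ?_, by rw [Function.iterate_succ_apply', hzc], hc,
    fun w hw hw0 ↦ ?_⟩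
  · rw [Function.iterate_succ', deriv_deriv_comp hdiff (hfk.differentiable two_ne_zero)
      (hf.differentiable_deriv_two _) (hfk.differentiable_deriv_two z), hzc,
      (hcrit_f x_c (Ioo_subset_Icc_self hxc)).mpr rfl, zero_mul, add_zero]
    exact mul_neg_of_neg_of_pos h2 (sq_pos_of_ne_zero (hcons z hz))
  · exact hmono.elim (·.injOn) (·.injOn) (Ioo_subset_Icc_self hw) (Ioo_subset_Icc_self hz)
      (((hcrit w hw).mp hw0).trans hzc.symm)

theorem crit_between_consecutive_crits
    (a b x_c : ℝ) (f : ℝ → ℝ) (hab : a < b)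
    (hmap : Set.MapsTo f (Set.Icc a b) (Set.Icc a b))
    (hf : ContDiff ℝ 2 f)
    (hxc : x_c ∈ Set.Ioo a b)
    (h2 : deriv (deriv f) x_c < 0)
    (hup : ∀ x ∈ Set.Ico a x_c, 0 < deriv f x)
    (hdn : ∀ x ∈ Set.Ioc x_c b, deriv f x < 0)
    (k : ℕ) (hk : 2 ≤ k) (hc : f x_c > x_c)
    (z₁ z₂ : ℝ) (hz₁ : z₁ ∈ Icc a b) (hz₂ : z₂ ∈ Icc a b) (hlt : z₁ < z₂)
    (hc₁ : deriv (f^[k]) z₁ = 0) (hc₂ : deriv (f^[k]) z₂ = 0)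
    (hcons : ∀ x ∈ Ioo z₁ z₂, deriv (f^[k]) x ≠ 0) :
    ((f^[k] z₁ - x_c) * (f^[k] z₂ - x_c) < 0 →
      ∃ z ∈ Ioo z₁ z₂, deriv (f^[k+1]) z = 0 ∧
        deriv (deriv (f^[k+1])) z < 0 ∧ f^[k+1] z = f x_c ∧ f x_c > x_c ∧
        ∀ w ∈ Ioo z₁ z₂, deriv (f^[k+1]) w = 0 → w = z) ∧
    (¬ ((f^[k] z₁ - x_c) * (f^[k] z₂ - x_c) < 0) →
      ∀ w ∈ Ioo z₁ z₂, deriv (f^[k+1]) w ≠ 0) :=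
  crit_between_consecutive_crits_general a b x_c f hmap hf hxc h2 hup hdn k hc z₁ z₂ hz₁ hz₂ hlt
    hcons
end

section
/- With eₙ the number of critical points of fⁿ and sᵢ the number of interior simple zeros of fⁱ(x) − x_c, one has eₙ = 1 + Σ_{i=1}^{n-1} sᵢ for every n ≥ 1. -/
open Set Filter Topology

/-!
Every critical point of `fⁿ` is a point whose orbit hits `x_c` before time `n`, since the chain
rule writes `(fⁿ)'(x)` as the product of `f'` along the orbit and `f'` vanishes only at `x_c`.
Sorting these points by the first time `i < n` at which the orbit meets `x_c` splits them into
`{x_c}` (for `i = 0`) and the interior simple zeros of `fⁱ − x_c` (for `1 ≤ i < n`).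
-/

theorem eq_zero_of_eventually_pos_of_eventually_neg {g : ℝ → ℝ} {c : ℝ} (hg : ContinuousAt g c)
    (hlt : ∀ᶠ x in 𝓝[<] c, 0 < g x) (hgt : ∀ᶠ x in 𝓝[>] c, g x < 0) : g c = 0 :=
  le_antisymm (le_of_tendsto (hg.mono_left nhdsWithin_le_nhds) (hgt.mono fun _ h ↦ h.le))
    (ge_of_tendsto (hg.mono_left nhdsWithin_le_nhds) (hlt.mono fun _ h ↦ h.le))

theorem deriv_iterate_eq_prod {f : ℝ → ℝ} (hf : Differentiable ℝ f) (n : ℕ) (x : ℝ) :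
    deriv (f^[n]) x = ∏ j ∈ Finset.range n, deriv f (f^[j] x) := by
  induction n with
  | zero => simp
  | succ n ih =>
    rw [Finset.prod_range_succ, ← ih, Function.iterate_succ', mul_comm]
    exact deriv_comp x (hf _) ((hf.iterate n) x)

section IterateCritical

variable {f : ℝ → ℝ} {s U : Set ℝ} {c : ℝ}

theorem deriv_iterate_eq_zero_iff (hf : Differentiable ℝ f) (hs : MapsTo f s s)
    (hc : ∀ y ∈ s, deriv f y = 0 ↔ y = c) {x : ℝ} (hx : x ∈ s) (n : ℕ) :
    deriv (f^[n]) x = 0 ↔ ∃ j < n, f^[j] x = c := by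
  simp only [deriv_iterate_eq_prod hf, Finset.prod_eq_zero_iff, Finset.mem_range]
  exact exists_congr fun j ↦ and_congr_right fun _ ↦ hc _ (hs.iterate j hx)

theorem setOf_deriv_iterate_succ_eq_zero (hf : Differentiable ℝ f) (hs : MapsTo f s s)
    (hc : ∀ y ∈ s, deriv f y = 0 ↔ y = c) (hU : U ⊆ s) (n : ℕ) :
    {x ∈ U | deriv (f^[n + 1]) x = 0} = {x ∈ U | deriv (f^[n]) x = 0} ∪
      {x ∈ U | f^[n] x = c ∧ (∀ j : ℕ, j < n → f^[j] x ≠ c) ∧ deriv (f^[n]) x ≠ 0} := by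
  ext x
  simp only [mem_ofPred_eq, mem_union, ← and_or_left]
  refine and_congr_right fun hxU ↦ ?_
  simp only [ne_eq, deriv_iterate_eq_zero_iff hf hs hc (hU hxU), Nat.exists_lt_succ_right]
  by_cases hbefore : ∃ j < n, f^[j] x = c
  · simp only [hbefore, true_or]
  · simp only [hbefore, false_or, not_false_eq_true, and_true]
    exact ⟨fun h ↦ ⟨h, fun j hj hjc ↦ hbefore ⟨j, hj, hjc⟩⟩, And.left⟩

end IterateCritical

theorem ncard_eq_add_sum_Ico_of_eq_union {α : Type*} {A B : ℕ → Set α}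
    (hA : ∀ n, 1 ≤ n → (A n).Finite) (hunion : ∀ n, A (n + 1) = A n ∪ B n)
    (hdisj : ∀ n, Disjoint (A n) (B n)) :
    ∀ n, 1 ≤ n → (A n).ncard = (A 1).ncard + ∑ i ∈ Finset.Ico 1 n, (B i).ncard := by
  intro n hn
  induction n, hn using Nat.le_induction with
  | base => simp
  | succ n hn ih =>
    have hB : (B n).Finite := (hA (n + 1) (by omega)).subset (hunion n ▸ subset_union_right)
    rw [hunion, ncard_union_eq (hdisj n) (hA n hn) hB, ih, Finset.sum_Ico_succ_top hn, add_assoc]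

theorem extrema_count_eq_sum_of_simple_zeros_general
    (a b x_c : ℝ) (f : ℝ → ℝ)
    (hmap : Set.MapsTo f (Set.Icc a b) (Set.Icc a b))
    (hf : ContDiff ℝ 2 f)
    (hxc : x_c ∈ Set.Ioo a b)
    (hup : ∀ x ∈ Set.Ico a x_c, 0 < deriv f x)
    (hdn : ∀ x ∈ Set.Ioc x_c b, deriv f x < 0)
    (hfin : ∀ n : ℕ, 1 ≤ n → {x ∈ Ioo a b | deriv (f^[n]) x = 0}.Finite) :
    ∀ n : ℕ, 1 ≤ n →
      {x ∈ Ioo a b | deriv (f^[n]) x = 0}.ncard =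
        1 + ∑ i ∈ Finset.Ico 1 n,
          {x ∈ Ioo a b | f^[i] x = x_c ∧ (∀ j : ℕ, j < i → f^[j] x ≠ x_c) ∧
            deriv (f^[i]) x ≠ 0}.ncard := by
  have hdiff : Differentiable ℝ f := hf.differentiable (by norm_num)
  have hcrit_xc : deriv f x_c = 0 :=
    eq_zero_of_eventually_pos_of_eventually_neg (hf.continuous_deriv (by norm_num)).continuousAt
      (eventually_of_mem (Ico_mem_nhdsLT hxc.1) hup)
      (eventually_of_mem (Ioc_mem_nhdsGT hxc.2) hdn)
  have hcrit : ∀ y ∈ Icc a b, deriv f y = 0 ↔ y = x_c := by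
    intro y ⟨hay, hyb⟩
    refine ⟨fun hy ↦ ?_, fun hy ↦ hy ▸ hcrit_xc⟩
    by_contra hne
    rcases lt_or_gt_of_ne hne with hlt | hgt
    · exact (hup y ⟨hay, hlt⟩).ne' hy
    · exact (hdn y ⟨hgt, hyb⟩).ne hy
  have hcrit_one : {x ∈ Ioo a b | deriv (f^[1]) x = 0} = {x_c} := by
    ext x
    simp only [mem_ofPred_eq, mem_singleton_iff, Function.iterate_one]
    exact ⟨fun ⟨hx, hd⟩ ↦ (hcrit x (Ioo_subset_Icc_self hx)).1 hd, fun hx ↦ hx ▸ ⟨hxc, hcrit_xc⟩⟩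
  intro n hn
  rw [ncard_eq_add_sum_Ico_of_eq_union hfin
    (setOf_deriv_iterate_succ_eq_zero hdiff hmap hcrit Ioo_subset_Icc_self)
    (fun n ↦ disjoint_left.2 fun _ hA hB ↦ hB.2.2.2 hA.2) n hn, hcrit_one, ncard_singleton]

theorem extrema_count_eq_sum_of_simple_zeros
    (a b x_c : ℝ) (f : ℝ → ℝ) (hab : a < b)
    (hmap : Set.MapsTo f (Set.Icc a b) (Set.Icc a b))
    (hf : ContDiff ℝ 2 f)
    (hxc : x_c ∈ Set.Ioo a b)
    (h2 : deriv (deriv f) x_c < 0)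
    (hup : ∀ x ∈ Set.Ico a x_c, 0 < deriv f x)
    (hdn : ∀ x ∈ Set.Ioc x_c b, deriv f x < 0)
    (hfin : ∀ n : ℕ, 1 ≤ n → {x ∈ Ioo a b | deriv (f^[n]) x = 0}.Finite) :
    ∀ n : ℕ, 1 ≤ n →
      {x ∈ Ioo a b | deriv (f^[n]) x = 0}.ncard =
        1 + ∑ i ∈ Finset.Ico 1 n,
          {x ∈ Ioo a b | f^[i] x = x_c ∧ (∀ j : ℕ, j < i → f^[j] x ≠ x_c) ∧
            deriv (f^[i]) x ≠ 0}.ncard :=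
  extrema_count_eq_sum_of_simple_zeros_general a b x_c f hmap hf hxc hup hdn hfin
end
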